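/- arXiv:2203.05959 — 3 statements merged into one kernel-verified Lean document; each statement's English description precedes it below -/
import Mathlib

section
/- Let f be a real nonnegative trigonometric polynomial of degree less than n with â₀(f) > 0, let A = C_n(f) and let D_A = â₀(f)·I_n be its diagonal part. If 0 < α < 2â₀(f)/‖f‖_∞, then the circulant matrix 2αD_A^{−1} − α²D_A^{−1}AD_A^{−1} is Hermitian positive definite. -/
open Matrix Filter Set
open scoped Real Topology ComplexConjugate ComplexOrder

noncomputable section

/-- The `j`-th Fourier coefficient of `f`. -/
def fcoeff (f : ℝ → ℂ) (j : ℤ) : ℂ :=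
  (1 / (2 * Real.pi)) * ∫ θ in (-Real.pi)..Real.pi, f θ * Complex.exp (-Complex.I * (j : ℂ) * (θ : ℂ))

/-- The matrix `Z_n^j`, whose `(i,l)` entry is `1` if `i - l ≡ j (mod n)` and `0` otherwise. -/
def Zmat (n : ℕ) (j : ℤ) : Matrix (Fin n) (Fin n) ℂ :=
  Matrix.of fun i l => if ((i : ℤ) - (l : ℤ) - j) % (n : ℤ) = 0 then 1 else 0

/-- The circulant matrix `C_n(f)` generated by `f`. -/
def circMat (n : ℕ) (f : ℝ → ℂ) : Matrix (Fin n) (Fin n) ℂ :=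
  ∑ j ∈ Finset.Ioo (-(n : ℤ)) (n : ℤ), fcoeff f j • Zmat n j

/-- The down-sampling matrix `K_n` (with `k = n/2` rows). -/
def Kmat (k n : ℕ) : Matrix (Fin k) (Fin n) ℂ :=
  Matrix.of fun i j => if (j : ℕ) = 2 * (i : ℕ) then 1 else 0

/-- `f` is a trigonometric polynomial of degree (strictly) less than `n`. -/
def IsTrigPolyDegLT (n : ℕ) (f : ℝ → ℂ) : Prop :=
  ∃ c : ℤ → ℂ, ∀ θ : ℝ,
    f θ = ∑ j ∈ Finset.Ioo (-(n : ℤ)) (n : ℤ), c j * Complex.exp (Complex.I * (j : ℂ) * (θ : ℂ))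

/-- `f` is a trigonometric polynomial of degree at most `z`. -/
def IsTrigPolyDeg (z : ℕ) (f : ℝ → ℂ) : Prop :=
  ∃ c : ℤ → ℂ, ∀ θ : ℝ,
    f θ = ∑ j ∈ Finset.Icc (-(z : ℤ)) (z : ℤ), c j * Complex.exp (Complex.I * (j : ℂ) * (θ : ℂ))

/-- The zeroth Fourier coefficient of a real function. -/
def a0 (f : ℝ → ℝ) : ℝ := (1 / (2 * Real.pi)) * ∫ θ in (-Real.pi)..Real.pi, f θ

/-- The supremum norm of a real function on `[0, 2π)`. -/
def supnorm (f : ℝ → ℝ) : ℝ := sSup ((fun θ => |f θ|) '' Set.Ico 0 (2 * Real.pi))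

/-- The two-grid iteration matrix with one step of damped Jacobi post-smoothing. -/
def TGMmat {N K : Type*} [Fintype N] [DecidableEq N] [Fintype K] [DecidableEq K]
    (X : Matrix N N ℂ) (P : Matrix N K ℂ) (ω : ℝ) : Matrix N N ℂ :=
  (1 - (ω : ℂ) • ((Matrix.diagonal fun i => X i i)⁻¹ * X)) *
    (1 - P * (Pᴴ * X * P)⁻¹ * Pᴴ * X)

/-- The coarse symbol operator `ψ`. -/
def psiC (g : ℝ → ℂ) : ℝ → ℂ := fun θ => (1 / 2) * (g (θ / 2) + g (θ / 2 + Real.pi))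

/-!
The Fourier matrix `F` diagonalises the circulant matrix of a trigonometric polynomial `g` of
degree `< n`: `n C_n(g) = F diag(g(θ_k)) Fᴴ`, while `F Fᴴ = n I`. As `D_A = a₀ I`, the matrix in
question is `n⁻¹ F diag(r_k) Fᴴ` with `r_k = α (2a₀ - α f(θ_k)) / a₀²`, which is positive because
`f(θ_k) ≤ ‖f‖_∞ < 2a₀/α`.
-/

theorem integral_exp_I_mul_intCast_mul (m : ℤ) :
    ∫ θ : ℝ in (-π)..π, Complex.exp (Complex.I * m * θ) = if m = 0 then 2 * (π : ℂ) else 0 := by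
  split_ifs with hm
  · simp [hm, two_mul]
  have hc : Complex.I * m ≠ 0 := mul_ne_zero Complex.I_ne_zero (Int.cast_ne_zero.2 hm)
  have hperiodic : Complex.exp (Complex.I * m * π) = Complex.exp (Complex.I * m * (-π : ℝ)) := by
    rw [show Complex.I * m * π = Complex.I * m * ((-π : ℝ) : ℂ) + m * (2 * π * Complex.I) by
        push_cast; ring,
      Complex.exp_add, Complex.exp_int_mul_two_pi_mul_I, mul_one]
  rw [integral_exp_mul_complex hc, hperiodic, sub_self, zero_div]

theorem fcoeff_eq_of_eq_sum {s : Finset ℤ} {g : ℝ → ℂ} {c : ℤ → ℂ}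
    (hg : ∀ θ : ℝ, g θ = ∑ j ∈ s, c j * Complex.exp (Complex.I * j * θ)) {l : ℤ} (hl : l ∈ s) :
    fcoeff g l = c l := by
  have hprod : ∀ (j : ℤ) (θ : ℝ), c j * Complex.exp (Complex.I * j * θ) *
      Complex.exp (-Complex.I * l * θ) = c j * Complex.exp (Complex.I * ((j - l : ℤ) : ℂ) * θ) := by
    intro j θ
    rw [mul_assoc, ← Complex.exp_add]
    push_cast
    ring_nf
  simp only [fcoeff, hg, Finset.sum_mul, hprod]
  rw [intervalIntegral.integral_finsetSum fun j _ => Continuous.intervalIntegrable (by fun_prop) _ _]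
  simp only [intervalIntegral.integral_const_mul, integral_exp_I_mul_intCast_mul, sub_eq_zero,
    mul_ite, mul_zero, Finset.sum_ite_eq', hl, if_true]
  field_simp

theorem sum_exp_two_pi_I_mul_div {n : ℕ} (hn : n ≠ 0) (m : ℤ) :
    ∑ k : Fin n, Complex.exp (2 * π * Complex.I * m * k / n) =
      if (n : ℤ) ∣ m then (n : ℂ) else 0 := by
  have hζ := Complex.isPrimitiveRoot_exp n hn
  set z := Complex.exp (2 * π * Complex.I / n) ^ m
  have hterm : ∀ k : Fin n, Complex.exp (2 * π * Complex.I * m * k / n) = z ^ (k : ℕ) := by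
    intro k
    rw [← zpow_natCast, ← _root_.zpow_mul, ← Complex.exp_int_mul]
    push_cast
    ring_nf
  simp only [hterm, Fin.sum_univ_eq_sum_range (z ^ ·)]
  split_ifs with hdvd
  · simp [z, (hζ.zpow_eq_one_iff_dvd m).2 hdvd]
  have hz : z ≠ 1 := fun h => hdvd ((hζ.zpow_eq_one_iff_dvd m).1 h)
  rw [geom_sum_eq hz, ← zpow_natCast, ← _root_.zpow_mul, mul_comm m, _root_.zpow_mul, zpow_natCast,
    hζ.pow_eq_one, _root_.one_zpow, sub_self, zero_div]

theorem Fin.intCast_dvd_sub_iff {n : ℕ} (i l : Fin n) : (n : ℤ) ∣ (l : ℤ) - i ↔ i = l := by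
  refine ⟨fun h => ?_, by rintro rfl; simp⟩
  have := Int.eq_zero_of_abs_lt_dvd h (by rw [abs_lt]; omega)
  omega

def fourierMatrix (n : ℕ) : Matrix (Fin n) (Fin n) ℂ :=
  of fun i k => Complex.exp (-(2 * π * Complex.I * i * k / n))

def fourierNode (n : ℕ) (k : Fin n) : ℝ := 2 * π * k / n

theorem fourierNode_mem_Ico {n : ℕ} (k : Fin n) : fourierNode n k ∈ Ico 0 (2 * π) := by
  have hk : (k : ℝ) < n := by exact_mod_cast k.isLt
  refine ⟨by unfold fourierNode; positivity, ?_⟩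
  rw [fourierNode, div_lt_iff₀ ((Nat.cast_nonneg _).trans_lt hk)]
  nlinarith [Real.pi_pos]

theorem fourierMatrix_mul_diagonal_mul_conjTranspose_apply (n : ℕ) (d : Fin n → ℂ) (i l : Fin n) :
    (fourierMatrix n * diagonal d * (fourierMatrix n)ᴴ) i l =
      ∑ k : Fin n, d k * Complex.exp (2 * π * Complex.I * ((l : ℤ) - i : ℤ) * k / n) := by
  simp only [mul_apply, diagonal_apply, conjTranspose_apply, fourierMatrix, of_apply, mul_ite,
    mul_zero, Finset.sum_ite_eq', Finset.mem_univ, if_true, Complex.star_def, ← Complex.exp_conj]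
  refine Finset.sum_congr rfl fun k _ => ?_
  rw [mul_comm (Complex.exp _), mul_assoc, ← Complex.exp_add]
  congr 2
  simp [map_div₀, Complex.conj_ofReal, map_ofNat]
  ring

theorem fourierMatrix_mul_conjTranspose (n : ℕ) :
    fourierMatrix n * (fourierMatrix n)ᴴ = (n : ℂ) • 1 := by
  ext i l
  have h := fourierMatrix_mul_diagonal_mul_conjTranspose_apply n (fun _ => 1) i l
  simp only [diagonal_one, Matrix.mul_one, one_mul] at h
  rw [h, sum_exp_two_pi_I_mul_div (Fin.pos i).ne']
  simp [Fin.intCast_dvd_sub_iff, one_apply]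

theorem fourierMatrix_vecMul_injective (n : ℕ) : Function.Injective (fourierMatrix n).vecMul := by
  intro v w hvw
  rcases n.eq_zero_or_pos with rfl | hn
  · exact Subsingleton.elim v w
  have h := congrArg (· ᵥ* (fourierMatrix n)ᴴ) hvw
  simp only [vecMul_vecMul, fourierMatrix_mul_conjTranspose, vecMul_smul, vecMul_one] at h
  exact smul_right_injective _ (Nat.cast_ne_zero.2 hn.ne') h

theorem IsTrigPolyDegLT.continuous {n : ℕ} {g : ℝ → ℂ} (hg : IsTrigPolyDegLT n g) :
    Continuous g := by
  obtain ⟨c, hc⟩ := hg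
  rw [funext hc]
  fun_prop

theorem IsTrigPolyDegLT.natCast_smul_circMat {n : ℕ} {g : ℝ → ℂ} (hg : IsTrigPolyDegLT n g) :
    (n : ℂ) • circMat n g =
      fourierMatrix n * diagonal (fun k => g (fourierNode n k)) * (fourierMatrix n)ᴴ := by
  obtain ⟨c, hc⟩ := hg
  ext i l
  have hn : n ≠ 0 := (Fin.pos i).ne'
  have hexp : ∀ (j : ℤ) (k : Fin n), Complex.exp (Complex.I * j * (fourierNode n k : ℂ)) *
      Complex.exp (2 * π * Complex.I * ((l : ℤ) - i : ℤ) * k / n) =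
      Complex.exp (2 * π * Complex.I * (j + l - i : ℤ) * k / n) := by
    intro j k
    rw [← Complex.exp_add, fourierNode]
    push_cast
    ring_nf
  have hdvd : ∀ j : ℤ, ((i : ℤ) - l - j) % n = 0 ↔ (n : ℤ) ∣ j + l - i := by
    intro j
    rw [← Int.dvd_iff_emod_eq_zero, ← dvd_neg, show -((i : ℤ) - l - j) = j + l - i by ring]
  rw [fourierMatrix_mul_diagonal_mul_conjTranspose_apply]
  simp only [hc, Finset.sum_mul]
  rw [Finset.sum_comm]
  simp only [Matrix.smul_apply, circMat, Matrix.sum_apply, smul_eq_mul, Finset.mul_sum, Zmat,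
    of_apply]
  refine Finset.sum_congr rfl fun j hj => ?_
  rw [Finset.sum_congr rfl fun k _ => by rw [mul_assoc, hexp], ← Finset.mul_sum,
    sum_exp_two_pi_I_mul_div hn, fcoeff_eq_of_eq_sum hc hj]
  simp only [hdvd]
  split_ifs <;> ring

theorem IsTrigPolyDegLT.smul_one_sub_smul_circMat {n : ℕ} {g : ℝ → ℂ} (hg : IsTrigPolyDegLT n g)
    (hn : n ≠ 0) (b c : ℂ) :
    b • 1 - c • circMat n g =
      (n : ℂ)⁻¹ • (fourierMatrix n * diagonal (fun k => b - c * g (fourierNode n k)) *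
        (fourierMatrix n)ᴴ) := by
  have hdiag : diagonal (fun k => b - c * g (fourierNode n k)) =
      b • 1 - c • diagonal (fun k => g (fourierNode n k)) := by
    ext i j
    by_cases h : i = j <;> simp [one_apply, h]
  have hn' : (n : ℂ) ≠ 0 := Nat.cast_ne_zero.2 hn
  rw [hdiag]
  simp only [Matrix.mul_sub, Matrix.sub_mul, Matrix.mul_smul, Matrix.smul_mul, Matrix.mul_one,
    fourierMatrix_mul_conjTranspose, ← hg.natCast_smul_circMat, smul_smul, smul_sub]
  match_scalars <;> field_simp

theorem supnorm_nonneg (f : ℝ → ℝ) : 0 ≤ supnorm f :=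
  Real.sSup_nonneg <| by
    rintro _ ⟨θ, -, rfl⟩
    exact abs_nonneg _

theorem abs_le_supnorm {f : ℝ → ℝ} (hf : Continuous f) {θ : ℝ} (hθ : θ ∈ Ico 0 (2 * π)) :
    |f θ| ≤ supnorm f :=
  le_csSup ((isCompact_Icc.image hf.abs).bddAbove.mono (image_mono Ico_subset_Icc_self))
    (mem_image_of_mem _ hθ)

theorem stmt3_general (n : ℕ) (f : ℝ → ℝ)
    (hf : IsTrigPolyDegLT n (fun θ => (f θ : ℂ)))
    (ha0 : 0 < a0 f)
    (α : ℝ) (hα0 : 0 < α) (hα : α < 2 * a0 f / supnorm f) :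
    (((2 * α : ℝ) : ℂ) • (((a0 f : ℝ) : ℂ)⁻¹ • (1 : Matrix (Fin n) (Fin n) ℂ)) -
      ((α ^ 2 : ℝ) : ℂ) • ((((a0 f : ℝ) : ℂ)⁻¹ • (1 : Matrix (Fin n) (Fin n) ℂ)) *
        circMat n (fun θ => (f θ : ℂ)) *
        (((a0 f : ℝ) : ℂ)⁻¹ • (1 : Matrix (Fin n) (Fin n) ℂ)))).PosDef := by
  rcases n.eq_zero_or_pos with rfl | hn
  · exact ⟨Subsingleton.elim _ _, fun x hx => (hx (Subsingleton.elim _ _)).elim⟩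
  have hs : 0 < supnorm f := (supnorm_nonneg f).lt_of_ne fun h => by
    rw [← h, div_zero] at hα
    linarith
  have hαs : α * supnorm f < 2 * a0 f := (lt_div_iff₀ hs).1 hα
  have hfc : Continuous f := by
    simpa [Function.comp_def] using Complex.continuous_re.comp hf.continuous
  simp only [Matrix.smul_mul, Matrix.mul_smul, Matrix.one_mul, Matrix.mul_one, smul_smul]
  rw [hf.smul_one_sub_smul_circMat hn.ne']
  refine ((PosDef.diagonal fun k => ?_).mul_mul_conjTranspose_same
    (fourierMatrix_vecMul_injective n)).smul (by positivity)
  have hfk : α * f (fourierNode n k) < 2 * a0 f := by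
    nlinarith [(le_abs_self _).trans (abs_le_supnorm hfc (fourierNode_mem_Ico k))]
  have hpos : 0 < α * (2 * a0 f - α * f (fourierNode n k)) / a0 f ^ 2 :=
    div_pos (mul_pos hα0 (by linarith)) (by positivity)
  convert Complex.zero_lt_real.2 hpos using 1
  push_cast
  field_simp

/-- Lemma on positivity of `2αD_A⁻¹ − α²D_A⁻¹AD_A⁻¹`. -/
theorem stmt3 (n : ℕ) (f : ℝ → ℝ)
    (hf : IsTrigPolyDegLT n (fun θ => (f θ : ℂ)))
    (hfnn : ∀ θ : ℝ, 0 ≤ f θ) (ha0 : 0 < a0 f)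
    (α : ℝ) (hα0 : 0 < α) (hα : α < 2 * a0 f / supnorm f) :
    (((2 * α : ℝ) : ℂ) • (((a0 f : ℝ) : ℂ)⁻¹ • (1 : Matrix (Fin n) (Fin n) ℂ)) -
      ((α ^ 2 : ℝ) : ℂ) • ((((a0 f : ℝ) : ℂ)⁻¹ • (1 : Matrix (Fin n) (Fin n) ℂ)) *
        circMat n (fun θ => (f θ : ℂ)) *
        (((a0 f : ℝ) : ℂ)⁻¹ • (1 : Matrix (Fin n) (Fin n) ℂ)))).PosDef :=
  stmt3_general n f hf ha0 α hα0 hα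
end
end

section
/- Let f be a real nonnegative trigonometric polynomial with f(θ₀) = 0 and f(θ) > 0 for all θ ∈ [0,2π)∖{θ₀}, and suppose the zero has order 2s, i.e., lim_{θ→θ₀} f(θ)/|θ−θ₀|^{2s} exists and is a positive finite number. Let p be a trigonometric polynomial satisfying |p(θ)|² + |p(θ+π)|² > 0 for all θ ∈ [0,2π) and limsup_{θ→θ₀} |p(θ+π)|²/f(θ) < ∞. Define f̂(θ) = (1/2)[(|p|²f)(θ/2) + (|p|²f)(θ/2 + π)] and θ̂₀ = 2θ₀ mod 2π. Then f̂(θ̂₀) = 0, f̂(θ) > 0 for all θ ∈ [0,2π)∖{θ̂₀}, and lim_{θ→θ̂₀} f̂(θ)/|θ−θ̂₀|^{2s} exists and is a positive finite number (so the zero of f̂ at θ̂₀ has the same order 2s). -/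
/-!
Near `θ₀` the hypothesis on `p` gives `‖p (θ + π)‖² = O(f θ) = O(|θ - θ₀| ^ (2s))`. Since
`‖p (· + π)‖²` is real analytic and `2s` is even, its quotient by `(θ - θ₀) ^ (2s)` is meromorphic
and bounded near `θ₀`, hence has a limit `L`; in particular `p (θ₀ + π) = 0`, so `p θ₀ ≠ 0`.
Writing `θ = 2φ`, `f̂ θ / |θ - 2θ₀| ^ (2s)` equals `2 ^ (-2s-1)` times
`‖p φ‖² f φ / |φ - θ₀| ^ (2s) + ‖p (φ + π)‖² f (φ + π) / |φ - θ₀| ^ (2s)`, and this sum tends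
to `‖p θ₀‖² c + L f (θ₀ + π) > 0`. Periodicity moves zero and limit from `2θ₀` to `2θ₀ - 2π`.
-/

open Matrix Filter Set
open scoped Real Topology ComplexConjugate ComplexOrder

noncomputable section

open Asymptotics

namespace IsTrigPolyDeg

variable {z : ℕ} {g : ℝ → ℂ}

theorem analyticAt (hg : IsTrigPolyDeg z g) (x : ℝ) : AnalyticAt ℝ g x := by
  obtain ⟨c, hc⟩ := hg
  rw [funext hc]
  refine Finset.analyticAt_fun_sum _ fun j _ => analyticAt_const.mul ?_
  exact analyticAt_cexp.restrictScalars.comp (analyticAt_const.mul (Complex.ofRealCLM.analyticAt x))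

theorem continuous (hg : IsTrigPolyDeg z g) : Continuous g :=
  continuous_iff_continuousAt.2 fun x => (hg.analyticAt x).continuousAt

theorem periodic (hg : IsTrigPolyDeg z g) : Function.Periodic g (2 * π) := by
  obtain ⟨c, hc⟩ := hg
  intro θ
  rw [hc, hc]
  refine Finset.sum_congr rfl fun j _ => congrArg (c j * ·) ?_
  rw [← Complex.exp_periodic.int_mul j (Complex.I * j * θ)]
  push_cast
  ring_nf

end IsTrigPolyDeg

theorem AnalyticAt.sq_norm {g : ℝ → ℂ} {x : ℝ} (hg : AnalyticAt ℝ g x) :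
    AnalyticAt ℝ (fun θ => ‖g θ‖ ^ 2) x := by
  have hre : AnalyticAt ℝ (fun θ => (g θ).re) x := (Complex.reCLM.analyticAt _).comp hg
  have him : AnalyticAt ℝ (fun θ => (g θ).im) x := (Complex.imCLM.analyticAt _).comp hg
  have hnorm : (fun θ => ‖g θ‖ ^ 2) = fun θ => (g θ).re ^ 2 + (g θ).im ^ 2 := by
    ext θ
    rw [Complex.sq_norm, Complex.normSq_apply]
    ring
  rw [hnorm]
  exact (hre.pow 2).add (him.pow 2)

theorem MeromorphicAt.exists_tendsto_of_isBigO_one {𝕜 E : Type*} [NontriviallyNormedField 𝕜]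
    [NormedAddCommGroup E] [NormedSpace 𝕜 E] {f : 𝕜 → E} {x : 𝕜} (hf : MeromorphicAt f x)
    (hb : f =O[𝓝[≠] x] fun _ => (1 : ℝ)) : ∃ c, Tendsto f (𝓝[≠] x) (𝓝 c) := by
  rw [tendsto_nhds_iff_meromorphicOrderAt_nonneg hf, ← not_lt,
    ← tendsto_cobounded_iff_meromorphicOrderAt_neg hf, ← tendsto_norm_atTop_iff_cobounded]
  exact fun h => not_isBoundedUnder_of_tendsto_atTop h ((isBigO_one_iff ℝ).1 hb)

theorem AnalyticAt.exists_tendsto_div_abs_pow_of_isBigO {h : ℝ → ℝ} {x : ℝ} {n : ℕ}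
    (hn : Even n) (hh : AnalyticAt ℝ h x) (hb : h =O[𝓝[≠] x] fun θ => |θ - x| ^ n) :
    ∃ L, Tendsto (fun θ => h θ / |θ - x| ^ n) (𝓝[≠] x) (𝓝 L) := by
  simp only [hn.pow_abs] at hb ⊢
  have hmer : MeromorphicAt (fun θ => h θ / (θ - x) ^ n) x := by fun_prop
  refine hmer.exists_tendsto_of_isBigO_one ?_
  have hne : ∀ᶠ θ in 𝓝[≠] x, (θ - x) ^ n ≠ 0 :=
    eventually_mem_nhdsWithin.mono fun θ hθ => pow_ne_zero _ (sub_ne_zero.2 hθ)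
  rw [isBigO_iff_isBoundedUnder_le_div hne] at hb
  exact (isBigO_one_iff ℝ).2 (by simpa only [norm_div] using hb)

theorem isBigO_of_isBoundedUnder_div {α : Type*} {l : Filter α} {u v : α → ℝ}
    (hu : ∀ᶠ a in l, 0 ≤ u a) (hv : ∀ᶠ a in l, 0 < v a)
    (h : IsBoundedUnder (· ≤ ·) l fun a => u a / v a) : u =O[l] v := by
  rw [isBigO_iff_isBoundedUnder_le_div (hv.mono fun _ => ne_of_gt)]
  refine h.mono_le ((hu.and hv).mono fun a ha => ?_)
  show ‖u a‖ / ‖v a‖ ≤ u a / v a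
  rw [Real.norm_of_nonneg ha.1, Real.norm_of_nonneg ha.2.le]

theorem eq_zero_of_isBigO_nhdsNE {X E F : Type*} [TopologicalSpace X] [NormedAddCommGroup E]
    [NormedAddCommGroup F] {u : X → E} {f : X → F} {x : X} [(𝓝[≠] x).NeBot]
    (hu : ContinuousAt u x) (hf : ContinuousAt f x) (hfx : f x = 0) (h : u =O[𝓝[≠] x] f) :
    u x = 0 :=
  tendsto_nhds_unique (hu.tendsto.mono_left nhdsWithin_le_nhds)
    (h.trans_tendsto (hfx ▸ hf.tendsto.mono_left nhdsWithin_le_nhds))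

section ZeroOrder

variable {f : ℝ → ℝ} {x c : ℝ} {n : ℕ}

theorem eventually_pos_of_tendsto_div_abs_pow
    (hf : Tendsto (fun θ => f θ / |θ - x| ^ n) (𝓝[≠] x) (𝓝 c)) (hc : 0 < c) :
    ∀ᶠ θ in 𝓝[≠] x, 0 < f θ := by
  filter_upwards [hf.eventually (lt_mem_nhds hc), self_mem_nhdsWithin] with θ hθ hne
  exact (div_pos_iff_of_pos_right (pow_pos (abs_pos.2 (sub_ne_zero.2 hne)) n)).1 hθ

theorem isBigO_abs_pow_of_tendsto_div
    (hf : Tendsto (fun θ => f θ / |θ - x| ^ n) (𝓝[≠] x) (𝓝 c)) :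
    f =O[𝓝[≠] x] fun θ => |θ - x| ^ n :=
  isBigO_of_div_tendsto_nhds (eventually_mem_nhdsWithin.mono fun _ hne h0 =>
    absurd h0 (pow_ne_zero n (abs_ne_zero.2 (sub_ne_zero.2 hne)))) c hf

theorem eq_zero_and_exists_tendsto_div_abs_pow_of_isBoundedUnder_div {u : ℝ → ℝ} (hn : Even n)
    (hu : AnalyticAt ℝ u x) (hu0 : ∀ θ, 0 ≤ u θ) (hfc : ContinuousAt f x) (hfx : f x = 0)
    (hf : Tendsto (fun θ => f θ / |θ - x| ^ n) (𝓝[≠] x) (𝓝 c)) (hc : 0 < c)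
    (hb : IsBoundedUnder (· ≤ ·) (𝓝[≠] x) fun θ => u θ / f θ) :
    u x = 0 ∧ ∃ L, 0 ≤ L ∧ Tendsto (fun θ => u θ / |θ - x| ^ n) (𝓝[≠] x) (𝓝 L) := by
  have huf : u =O[𝓝[≠] x] f := isBigO_of_isBoundedUnder_div (.of_forall hu0)
    (eventually_pos_of_tendsto_div_abs_pow hf hc) hb
  obtain ⟨L, hL⟩ :=
    hu.exists_tendsto_div_abs_pow_of_isBigO hn (huf.trans (isBigO_abs_pow_of_tendsto_div hf))
  exact ⟨eq_zero_of_isBigO_nhdsNE hu.continuousAt hfc hfx huf, L,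
    ge_of_tendsto' hL fun θ => div_nonneg (hu0 θ) (by positivity), hL⟩

end ZeroOrder

theorem tendsto_half_nhdsNE (x : ℝ) : Tendsto (· / 2) (𝓝[≠] (2 * x)) (𝓝[≠] x) := by
  have h := (Homeomorph.mulRight₀ (2⁻¹ : ℝ) (by norm_num)).map_punctured_nhds_eq (2 * x)
  simp only [Homeomorph.coe_mulRight₀, show 2 * x * 2⁻¹ = x by ring] at h
  simp only [div_eq_mul_inv]
  exact h.le

theorem Function.Periodic.tendsto_div_abs_pow_sub {G : ℝ → ℝ} {T a L : ℝ} {n : ℕ}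
    (hG : Function.Periodic G T) (h : Tendsto (fun θ => G θ / |θ - a| ^ n) (𝓝[≠] a) (𝓝 L)) :
    Tendsto (fun θ => G θ / |θ - (a - T)| ^ n) (𝓝[≠] (a - T)) (𝓝 L) := by
  have hshift : Tendsto (· + T) (𝓝[≠] (a - T)) (𝓝[≠] a) := by
    have h := map_add_right_nhdsNE (c := T) (a := a - T)
    rw [sub_add_cancel] at h
    exact h.le
  refine (h.comp hshift).congr fun θ => ?_
  simp only [Function.comp, hG θ]
  ring_nf

def psiReal (g : ℝ → ℝ) : ℝ → ℝ := fun θ => (1 / 2) * (g (θ / 2) + g (θ / 2 + π))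

theorem psiReal_periodic {g : ℝ → ℝ} (hg : Function.Periodic g (2 * π)) :
    Function.Periodic (psiReal g) (2 * π) := by
  intro θ
  simp only [psiReal]
  rw [show (θ + 2 * π) / 2 = θ / 2 + π by ring, show θ / 2 + π + π = θ / 2 + 2 * π by ring, hg]
  ring

theorem tendsto_psiReal_div_abs_pow {g : ℝ → ℝ} {x A B : ℝ} {n : ℕ}
    (h₁ : Tendsto (fun φ => g φ / |φ - x| ^ n) (𝓝[≠] x) (𝓝 A))
    (h₂ : Tendsto (fun φ => g (φ + π) / |φ - x| ^ n) (𝓝[≠] x) (𝓝 B)) :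
    Tendsto (fun θ => psiReal g θ / |θ - 2 * x| ^ n) (𝓝[≠] (2 * x))
      (𝓝 ((A + B) / 2 ^ (n + 1))) := by
  refine (((h₁.add h₂).div_const (2 ^ (n + 1))).comp (tendsto_half_nhdsNE x)).congr' ?_
  filter_upwards [self_mem_nhdsWithin] with θ (hne : θ ≠ 2 * x)
  have hd : |θ / 2 - x| ≠ 0 := abs_ne_zero.2 fun h => hne (by linarith)
  have hθ : |θ - 2 * x| = 2 * |θ / 2 - x| := by
    rw [show θ - 2 * x = 2 * (θ / 2 - x) by ring, abs_mul, abs_two]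
  simp only [Function.comp, psiReal, hθ]
  rw [mul_pow, pow_succ]
  field_simp

theorem tendsto_psiReal_mul_div_abs_pow {w f : ℝ → ℝ} {x c L : ℝ} {n : ℕ}
    (hw : ContinuousAt w x) (hf : ContinuousAt f (x + π))
    (hfc : Tendsto (fun φ => f φ / |φ - x| ^ n) (𝓝[≠] x) (𝓝 c))
    (hwL : Tendsto (fun φ => w (φ + π) / |φ - x| ^ n) (𝓝[≠] x) (𝓝 L)) :
    Tendsto (fun θ => psiReal (fun φ => w φ * f φ) θ / |θ - 2 * x| ^ n) (𝓝[≠] (2 * x))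
      (𝓝 ((w x * c + L * f (x + π)) / 2 ^ (n + 1))) := by
  refine tendsto_psiReal_div_abs_pow ?_ ?_
  · exact ((hw.tendsto.mono_left nhdsWithin_le_nhds).mul hfc).congr fun φ =>
      (mul_div_assoc _ _ _).symm
  · have hf' : ContinuousAt (fun φ => f (φ + π)) x := hf.comp (f := (· + π)) (by fun_prop)
    exact (hwL.mul (hf'.tendsto.mono_left nhdsWithin_le_nhds)).congr fun φ =>
      div_mul_eq_mul_div _ _ _

theorem psiReal_mul_pos {w f : ℝ → ℝ} {x θ : ℝ} (hw : ∀ φ, 0 ≤ w φ)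
    (hw₂ : ∀ φ ∈ Ico 0 (2 * π), 0 < w φ + w (φ + π))
    (hf : ∀ φ ∈ Ico 0 (2 * π), φ ≠ x → 0 < f φ) (hθ : θ ∈ Ico 0 (2 * π))
    (hne : θ ≠ if 2 * x < 2 * π then 2 * x else 2 * x - 2 * π) :
    0 < psiReal (fun φ => w φ * f φ) θ := by
  obtain ⟨h0, h2π⟩ := hθ
  have hf₁ : 0 < f (θ / 2) := hf _ ⟨by linarith, by linarith⟩ fun h =>
    hne (by rw [if_pos (by linarith)]; linarith)
  have hf₂ : 0 < f (θ / 2 + π) := hf _ ⟨by linarith, by linarith⟩ fun h =>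
    hne (by rw [if_neg (by linarith)]; linarith)
  have hsum : 0 < w (θ / 2) * f (θ / 2) + w (θ / 2 + π) * f (θ / 2 + π) :=
    calc 0 < (w (θ / 2) + w (θ / 2 + π)) * min (f (θ / 2)) (f (θ / 2 + π)) :=
          mul_pos (hw₂ _ ⟨by linarith, by linarith⟩) (lt_min hf₁ hf₂)
      _ ≤ _ := by
          rw [add_mul]
          gcongr
          exacts [hw _, min_le_left _ _, hw _, min_le_right _ _]
  exact mul_pos one_half_pos hsum

/-- the coarse symbol `f̂` has a zero of the same order `2s` at `θ̂₀ = 2θ₀ mod 2π`. -/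
theorem stmt6 (f : ℝ → ℝ) (p : ℝ → ℂ) (θ₀ : ℝ) (s : ℕ)
    (hf : ∃ z, IsTrigPolyDeg z (fun θ => (f θ : ℂ)))
    (hfnn : ∀ θ : ℝ, 0 ≤ f θ)
    (hθ₀ : θ₀ ∈ Set.Ico (0 : ℝ) (2 * Real.pi))
    (hf0 : f θ₀ = 0)
    (hfpos : ∀ θ ∈ Set.Ico (0 : ℝ) (2 * Real.pi), θ ≠ θ₀ → 0 < f θ)
    (c : ℝ) (hc : 0 < c)
    (horder : Filter.Tendsto (fun θ => f θ / |θ - θ₀| ^ (2 * s)) (𝓝[≠] θ₀) (𝓝 c))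
    (hp : ∃ z, IsTrigPolyDeg z p)
    (hp1 : ∀ θ ∈ Set.Ico (0 : ℝ) (2 * Real.pi), 0 < ‖p θ‖ ^ 2 + ‖p (θ + Real.pi)‖ ^ 2)
    (hp2 : Filter.IsBoundedUnder (· ≤ ·) (𝓝[≠] θ₀) (fun θ => ‖p (θ + Real.pi)‖ ^ 2 / f θ))
    (fhat : ℝ → ℝ)
    (hfhat : ∀ θ : ℝ, fhat θ = (1 / 2) *
      (‖p (θ / 2)‖ ^ 2 * f (θ / 2) + ‖p (θ / 2 + Real.pi)‖ ^ 2 * f (θ / 2 + Real.pi)))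
    (θhat : ℝ)
    (hθhat : θhat = if 2 * θ₀ < 2 * Real.pi then 2 * θ₀ else 2 * θ₀ - 2 * Real.pi) :
    fhat θhat = 0 ∧
      (∀ θ ∈ Set.Ico (0 : ℝ) (2 * Real.pi), θ ≠ θhat → 0 < fhat θ) ∧
      ∃ c' : ℝ, 0 < c' ∧
        Filter.Tendsto (fun θ => fhat θ / |θ - θhat| ^ (2 * s)) (𝓝[≠] θhat) (𝓝 c') := by
  obtain ⟨zf, hfz⟩ := hf
  obtain ⟨zp, hpz⟩ := hp
  have hfC : Continuous f := Complex.continuous_re.comp hfz.continuous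
  have hf_per : Function.Periodic f (2 * π) := fun θ => Complex.ofReal_injective (hfz.periodic θ)
  obtain ⟨hpπ, L, hL0, hL⟩ := eq_zero_and_exists_tendsto_div_abs_pow_of_isBoundedUnder_div
    (u := fun θ => ‖p (θ + π)‖ ^ 2) (even_two_mul s)
    ((hpz.analyticAt (θ₀ + π)).comp (f := (· + π)) (by fun_prop)).sq_norm
    (fun _ => by positivity) hfC.continuousAt hf0 horder hc hp2
  have hpθ₀ : 0 < ‖p θ₀‖ ^ 2 := by simpa [hpπ] using hp1 θ₀ hθ₀
  have hfhat_eq : fhat = psiReal (fun θ => ‖p θ‖ ^ 2 * f θ) := funext hfhat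
  have hfhat_per : Function.Periodic fhat (2 * π) := hfhat_eq ▸ psiReal_periodic fun θ => by
    simp only [hpz.periodic θ, hf_per θ]
  have hlim := hfhat_eq ▸ tendsto_psiReal_mul_div_abs_pow (hpz.continuous.norm.pow 2).continuousAt
    hfC.continuousAt horder hL
  have hc' : 0 < (‖p θ₀‖ ^ 2 * c + L * f (θ₀ + π)) / 2 ^ (2 * s + 1) :=
    div_pos (add_pos_of_pos_of_nonneg (mul_pos hpθ₀ hc) (mul_nonneg hL0 (hfnn _))) (by positivity)
  have hθhat' : θhat = 2 * θ₀ ∨ θhat = 2 * θ₀ - 2 * π := by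
    split_ifs at hθhat <;> simp [hθhat]
  refine ⟨?_, ?_, _, hc', ?_⟩
  · rcases hθhat' with rfl | rfl <;> simp [hfhat_per.sub_eq, hfhat, hf0, hpπ]
  · exact fun θ hθ hne => hfhat_eq ▸ psiReal_mul_pos (fun _ => by positivity) hp1 hfpos hθ
      (hθhat ▸ hne)
  · rcases hθhat' with rfl | rfl
    · exact hlim
    · exact hfhat_per.tendsto_div_abs_pow_sub hlim
end
end

section
/- Let p_A be a trigonometric polynomial of degree q_A and f_{A,0} a trigonometric polynomial of degree z₀. Define recursively f_{A,ℓ+1} = ψ(|p_A|²·f_{A,ℓ}) for ℓ ≥ 0, where ψ(g)(θ) = (1/2)[g(θ/2) + g(θ/2+π)]. Then (1) the degree of f_{A,ℓ} is at most max(z₀, 2q_A) for every ℓ ≥ 0, and (2) there exists L such that for all ℓ ≥ L the degree of f_{A,ℓ} is at most 2q_A. -/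
open Matrix Filter Set
open scoped Real Topology ComplexConjugate ComplexOrder

noncomputable section

/-!
Trigonometric polynomials are closed under products (degrees add) and conjugation, so `|p_A|²`
has degree at most `2 q_A`. Since `e^{ijπ} = -1` for odd `j`, the operator `ψ` kills the odd
frequencies and halves the even ones, so it maps degree `d` to degree `⌊d / 2⌋`. Hence
`deg f_{ℓ+1} ≤ ⌊(2 q_A + deg f_ℓ) / 2⌋`: this preserves the bound `max z₀ (2 q_A)`, and it
propagates the bound `2 q_A + ⌊z₀ / 2^ℓ⌋`, which equals `2 q_A` as soon as `2^ℓ > z₀`.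
-/

namespace IsTrigPolyDeg

lemma of_sum {ι : Type*} (s : Finset ι) (a : ι → ℂ) (k : ι → ℤ) {z : ℕ}
    (hk : ∀ i ∈ s, |k i| ≤ z) :
    IsTrigPolyDeg z fun θ => ∑ i ∈ s, a i * Complex.exp (Complex.I * (k i : ℂ) * (θ : ℂ)) := by
  classical
  refine ⟨fun j => ∑ i ∈ s with k i = j, a i, fun θ => ?_⟩
  dsimp only
  rw [← Finset.sum_fiberwise_of_maps_to (g := k) (t := Finset.Icc (-(z : ℤ)) z)
    fun i hi => Finset.mem_Icc.2 (abs_le.1 (hk i hi))]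
  refine Finset.sum_congr rfl fun j _ => ?_
  rw [Finset.sum_mul]
  exact Finset.sum_congr rfl fun i hi => by rw [(Finset.mem_filter.1 hi).2]

lemma mono {z z' : ℕ} {f : ℝ → ℂ} (hf : IsTrigPolyDeg z f) (h : z ≤ z') :
    IsTrigPolyDeg z' f := by
  obtain ⟨c, hc⟩ := hf
  rw [show f = _ from funext hc]
  exact of_sum _ c (fun j => j) fun j hj => by
    rw [Finset.mem_Icc] at hj
    exact abs_le.2 ⟨by omega, by omega⟩

lemma mul {a b : ℕ} {f g : ℝ → ℂ} (hf : IsTrigPolyDeg a f) (hg : IsTrigPolyDeg b g) :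
    IsTrigPolyDeg (a + b) fun θ => f θ * g θ := by
  obtain ⟨c, hc⟩ := hf
  obtain ⟨d, hd⟩ := hg
  convert of_sum (Finset.Icc (-(a : ℤ)) a ×ˢ Finset.Icc (-(b : ℤ)) b)
    (fun x => c x.1 * d x.2) (fun x => x.1 + x.2) (fun x hx => ?_) using 2 with θ
  · rw [hc, hd, Finset.sum_mul_sum, Finset.sum_product]
    refine Finset.sum_congr rfl fun i _ => Finset.sum_congr rfl fun j _ => ?_
    rw [mul_mul_mul_comm, ← Complex.exp_add]
    push_cast
    ring_nf
  · simp only [Finset.mem_product, Finset.mem_Icc] at hx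
    exact abs_le.2 ⟨by omega, by omega⟩

lemma star {q : ℕ} {p : ℝ → ℂ} (hp : IsTrigPolyDeg q p) :
    IsTrigPolyDeg q fun θ => star (p θ) := by
  obtain ⟨c, hc⟩ := hp
  convert of_sum (Finset.Icc (-(q : ℤ)) q) (fun j => starRingEnd ℂ (c j)) (fun j => -j)
    (fun j hj => ?_) using 2 with θ
  · simp only [hc, star_sum, star_mul', Complex.star_def, ← Complex.exp_conj, map_mul,
      Complex.conj_I, Complex.conj_ofReal, map_intCast]
    refine Finset.sum_congr rfl fun j _ => ?_
    push_cast
    ring_nf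
  · rw [Finset.mem_Icc] at hj
    exact abs_le.2 ⟨by omega, by omega⟩

lemma normSq {q : ℕ} {p : ℝ → ℂ} (hp : IsTrigPolyDeg q p) :
    IsTrigPolyDeg (2 * q) fun θ => ((‖p θ‖ ^ 2 : ℝ) : ℂ) := by
  rw [two_mul]
  convert hp.mul hp.star using 2 with θ
  rw [Complex.star_def, Complex.mul_conj, Complex.normSq_eq_norm_sq]

end IsTrigPolyDeg

lemma psiC_exp (j : ℤ) (θ : ℝ) :
    psiC (fun t => Complex.exp (Complex.I * (j : ℂ) * (t : ℂ))) θ =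
      if Even j then Complex.exp (Complex.I * ((j / 2 : ℤ) : ℂ) * (θ : ℂ)) else 0 := by
  obtain ⟨m, rfl | rfl⟩ := Int.even_or_odd' j
  · have hshift : Complex.I * ((2 * m : ℤ) : ℂ) * ((θ / 2 + Real.pi : ℝ) : ℂ) =
        Complex.I * ((2 * m : ℤ) : ℂ) * ((θ / 2 : ℝ) : ℂ) + m * (2 * Real.pi * Complex.I) := by
      push_cast; ring
    rw [psiC, if_pos (even_two_mul m), Int.mul_ediv_cancel_left m two_ne_zero, hshift,
      Complex.exp_add, Complex.exp_int_mul_two_pi_mul_I]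
    push_cast
    ring_nf
  · have hshift : Complex.I * ((2 * m + 1 : ℤ) : ℂ) * ((θ / 2 + Real.pi : ℝ) : ℂ) =
        Complex.I * ((2 * m + 1 : ℤ) : ℂ) * ((θ / 2 : ℝ) : ℂ) + m * (2 * Real.pi * Complex.I) +
          Real.pi * Complex.I := by
      push_cast; ring
    rw [psiC, if_neg (Int.not_even_iff_odd.2 (odd_two_mul_add_one m)), hshift, Complex.exp_add,
      Complex.exp_add, Complex.exp_int_mul_two_pi_mul_I, Complex.exp_pi_mul_I]
    ring

lemma isTrigPolyDeg_psiC {d : ℕ} {f : ℝ → ℂ} (hf : IsTrigPolyDeg d f) :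
    IsTrigPolyDeg (d / 2) (psiC f) := by
  obtain ⟨c, hc⟩ := hf
  have hψ : psiC f = fun θ : ℝ => ∑ j ∈ Finset.Icc (-(d : ℤ)) d with Even j,
      c j * Complex.exp (Complex.I * ((j / 2 : ℤ) : ℂ) * (θ : ℂ)) := by
    funext θ
    calc psiC f θ
        = ∑ j ∈ Finset.Icc (-(d : ℤ)) d,
            c j * psiC (fun t => Complex.exp (Complex.I * (j : ℂ) * (t : ℂ))) θ := by
          simp only [psiC, hc, Finset.mul_sum, ← Finset.sum_add_distrib]
          exact Finset.sum_congr rfl fun j _ => by ring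
      _ = _ := by simp only [psiC_exp, mul_ite, mul_zero, Finset.sum_filter]
  rw [hψ]
  refine IsTrigPolyDeg.of_sum _ _ _ fun j hj => ?_
  rw [Finset.mem_filter, Finset.mem_Icc, Int.even_iff] at hj
  exact abs_le.2 ⟨by omega, by omega⟩

lemma isTrigPolyDeg_psiC_normSq_mul {q d : ℕ} {p f : ℝ → ℂ} (hp : IsTrigPolyDeg q p)
    (hf : IsTrigPolyDeg d f) :
    IsTrigPolyDeg ((2 * q + d) / 2) (psiC fun θ => ((‖p θ‖ ^ 2 : ℝ) : ℂ) * f θ) :=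
  isTrigPolyDeg_psiC (hp.normSq.mul hf)

lemma isTrigPolyDeg_of_psiC_normSq_mul_rec {q : ℕ} {p : ℝ → ℂ} (hp : IsTrigPolyDeg q p)
    {f : ℕ → ℝ → ℂ} (hrec : ∀ ℓ, f (ℓ + 1) = psiC fun θ => ((‖p θ‖ ^ 2 : ℝ) : ℂ) * f ℓ θ)
    {d : ℕ → ℕ} (h0 : IsTrigPolyDeg (d 0) (f 0)) (hd : ∀ ℓ, (2 * q + d ℓ) / 2 ≤ d (ℓ + 1)) :
    ∀ ℓ, IsTrigPolyDeg (d ℓ) (f ℓ)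
  | 0 => h0
  | ℓ + 1 => hrec ℓ ▸
      (isTrigPolyDeg_psiC_normSq_mul hp
        (isTrigPolyDeg_of_psiC_normSq_mul_rec hp hrec h0 hd ℓ)).mono (hd ℓ)

/-- bounds on the degrees of the coarse symbols `f_{A,ℓ}`. -/
theorem stmt8 (qA z₀ : ℕ) (pA : ℝ → ℂ) (hpA : IsTrigPolyDeg qA pA)
    (fA : ℕ → ℝ → ℂ) (h0 : IsTrigPolyDeg z₀ (fA 0))
    (hrec : ∀ ℓ : ℕ, fA (ℓ + 1) = psiC (fun θ => ((‖pA θ‖ ^ 2 : ℝ) : ℂ) * fA ℓ θ)) :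
    (∀ ℓ : ℕ, IsTrigPolyDeg (max z₀ (2 * qA)) (fA ℓ)) ∧
      ∃ L : ℕ, ∀ ℓ ≥ L, IsTrigPolyDeg (2 * qA) (fA ℓ) := by
  refine ⟨isTrigPolyDeg_of_psiC_normSq_mul_rec hpA hrec (d := fun _ => max z₀ (2 * qA))
    (h0.mono (le_max_left _ _)) fun _ => by omega, z₀, fun ℓ hℓ => ?_⟩
  have hdecay := isTrigPolyDeg_of_psiC_normSq_mul_rec hpA hrec
    (d := fun ℓ => 2 * qA + z₀ / 2 ^ ℓ) (h0.mono (by simp))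
    (fun ℓ => by rw [pow_succ, ← Nat.div_div_eq_div_mul]; omega) ℓ
  have hvanish : z₀ / 2 ^ ℓ = 0 :=
    Nat.div_eq_of_lt (z₀.lt_two_pow_self.trans_le (Nat.pow_le_pow_right two_pos hℓ))
  simpa [hvanish] using hdecay
end
end
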